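/- arXiv:2404.07361 — 3 statements merged into one kernel-verified Lean document; each statement's English description precedes it below -/
import Mathlib

section
/- A continuously differentiable function f : ℝ^d → ℝ^d has a scalar-valued potential (i.e., there exists F : ℝ^d → ℝ with ∇F = f) if and only if its Jacobian matrix is symmetric at every point. -/
/-!
If `∇F = f`, the Jacobian of `f` is the Hessian of `F`, which is symmetric by Schwarz's theorem.
Conversely, symmetry of the Jacobian says that the 1-form `x ↦ ⟪f x, ·⟫` is closed, hence exact on
the convex space by the Poincaré lemma.
-/

open RealInnerProductSpace Filter Topology Set

section InnerProductSpace

variable {E : Type*} [NormedAddCommGroup E] [InnerProductSpace ℝ E]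

theorem isClosed_setOf_inner_fderiv_symm {f : E → E} (hf : Continuous (fderiv ℝ f)) :
    IsClosed {x | ∀ u v, ⟪fderiv ℝ f x u, v⟫ = ⟪u, fderiv ℝ f x v⟫} := by
  simp only [ofPred_forall]
  refine isClosed_iInter fun u => isClosed_iInter fun v => isClosed_eq ?_ ?_
  · exact (hf.clm_apply continuous_const).inner continuous_const
  · exact continuous_const.inner (hf.clm_apply continuous_const)

variable [CompleteSpace E]

theorem hasGradientAt_iff_hasFDerivAt_innerSL {F : E → ℝ} {g x : E} :
    HasGradientAt F g x ↔ HasFDerivAt F (innerSL ℝ g) x :=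
  Iff.rfl

theorem hasGradientAt_of_gradient_eq_of_ne_zero {F : E → ℝ} {g x : E} (h : gradient F x = g)
    (hg : g ≠ 0) : HasGradientAt F g x := by
  have hF : DifferentiableAt ℝ F x := by
    by_contra hF
    exact hg (h ▸ gradient_eq_zero_of_not_differentiableAt hF)
  exact h ▸ hF.hasGradientAt

theorem inner_fderiv_symm_of_eventually_hasGradientAt {F : E → ℝ} {f : E → E} {x : E}
    (hF : ∀ᶠ y in 𝓝 x, HasGradientAt F (f y) y) (hf : DifferentiableAt ℝ f x) (u v : E) :
    ⟪fderiv ℝ f x u, v⟫ = ⟪u, fderiv ℝ f x v⟫ := by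
  have hF' : ∀ᶠ y in 𝓝 x, HasFDerivAt F (innerSL ℝ (f y)) y := by
    simpa only [hasGradientAt_iff_hasFDerivAt_innerSL] using hF
  have hsymm := second_derivative_symmetric_of_eventually_of_real hF'
    ((innerSL ℝ).hasFDerivAt.comp x hf.hasFDerivAt) u v
  simp only [ContinuousLinearMap.comp_apply] at hsymm
  rw [innerSL_apply_apply, innerSL_apply_apply] at hsymm
  rw [hsymm, real_inner_comm]

theorem inner_fderiv_symm_of_gradient_eq {F : E → ℝ} {f : E → E} (hf : ContDiff ℝ 1 f)
    (hF : ∀ x, gradient F x = f x) (x u v : E) :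
    ⟪fderiv ℝ f x u, v⟫ = ⟪u, fderiv ℝ f x v⟫ := by
  set U := {y | f y ≠ 0}
  have hU : IsOpen U := isOpen_ne_fun hf.continuous continuous_const
  -- `gradient F y = f y` forces `F` to be differentiable at `y` only where `f y ≠ 0` (junk value
  -- `0` otherwise); away from `closure U` the map `f` vanishes identically instead.
  have hsymm_U : U ⊆ {y | ∀ u v, ⟪fderiv ℝ f y u, v⟫ = ⟪u, fderiv ℝ f y v⟫} := fun y hy =>
    inner_fderiv_symm_of_eventually_hasGradientAt
      (eventually_of_mem (hU.mem_nhds hy) fun z hz =>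
        hasGradientAt_of_gradient_eq_of_ne_zero (hF z) hz)
      (hf.differentiable one_ne_zero y)
  by_cases hx : x ∈ closure U
  · exact closure_minimal hsymm_U
      (isClosed_setOf_inner_fderiv_symm (hf.continuous_fderiv one_ne_zero)) hx u v
  · have hf_zero : f =ᶠ[𝓝 x] fun _ => 0 := by
      filter_upwards [isClosed_closure.isOpen_compl.mem_nhds hx] with y hy
      exact not_not.1 fun hfy => hy (subset_closure hfy)
    simp [hf_zero.fderiv_eq]

theorem exists_hasGradientAt_of_inner_fderiv_symm {f : E → E} (hf : Differentiable ℝ f)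
    (hsymm : ∀ x u v, ⟪fderiv ℝ f x u, v⟫ = ⟪u, fderiv ℝ f x v⟫) :
    ∃ F : E → ℝ, ∀ x, HasGradientAt F (f x) x := by
  have hω (x : E) :
      HasFDerivAt (fun y => innerSL ℝ (f y)) ((innerSL ℝ).comp (fderiv ℝ f x)) x :=
    (innerSL ℝ).hasFDerivAt.comp x (hf x).hasFDerivAt
  obtain ⟨F, hF⟩ := convex_univ.exists_forall_hasFDerivAt_of_fderiv_symmetric isOpen_univ
    (fun x _ => (hω x).differentiableAt.differentiableWithinAt) fun x _ u v => by
      simp only [(hω x).fderiv, ContinuousLinearMap.comp_apply]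
      rw [innerSL_apply_apply, innerSL_apply_apply, hsymm, real_inner_comm]
  exact ⟨F, fun x => hasGradientAt_iff_hasFDerivAt_innerSL.2 (hF x trivial)⟩

end InnerProductSpace

/-- A C¹ map f : ℝ^d → ℝ^d has a scalar potential iff its Jacobian is symmetric everywhere. -/
theorem gradnet_symmetric_jacobian_iff_potential (d : ℕ)
    (f : EuclideanSpace ℝ (Fin d) → EuclideanSpace ℝ (Fin d))
    (hf : ContDiff ℝ 1 f) :
    (∃ F : EuclideanSpace ℝ (Fin d) → ℝ, ∀ x, gradient F x = f x) ↔
      (∀ x u v, ⟪fderiv ℝ f x u, v⟫ = ⟪u, fderiv ℝ f x v⟫) := by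
  refine ⟨fun ⟨F, hF⟩ => inner_fderiv_symm_of_gradient_eq hf hF, fun hsymm => ?_⟩
  obtain ⟨F, hF⟩ :=
    exists_hasGradientAt_of_inner_fderiv_symm (hf.differentiable one_ne_zero) hsymm
  exact ⟨F, fun x => (hF x).gradient⟩
end

section
/- Let f : [0,1] → ℝ be continuous and nondecreasing, and let σ : ℝ → [0,1] be continuous, nondecreasing with σ(x) → 0 as x → −∞ and σ(x) → 1 as x → +∞. Then for every ε > 0 there exist n ∈ ℕ, t ≥ 1, and nonnegative coefficients Δ_i such that g(x) = f(0) + ∑_{i=1}^{2^n} Δ_i · σ(t(2^{n+1}x − 2i + 1)) satisfies sup_{x∈[0,1]} |f(x) − g(x)| < ε. -/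
/-!
Take `n` so fine that `f` varies by less than `ε/3` over each dyadic interval of length `2⁻ⁿ`.
The `j`-th sigmoid is centred at the midpoint of the `j`-th interval, so for `t` large it is
`η`-close to `1` on the intervals left of the one containing `x` (say the `k`-th) and `η`-close
to `0` on those to its right. The weighted sum therefore telescopes to `f (k / 2ⁿ) - f 0`, up to
the single increment `Δ_k < ε/3` and `η (f 1 - f 0) < ε/3`, and `f (k / 2ⁿ)` is `ε/3`-close to
`f x`.
-/

open Finset Filter Topology

theorem abs_sum_mul_sub_sum_mul_le {ι : Type*} [DecidableEq ι] (I : Finset ι) (k : ι)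
    {a u v : ι → ℝ} {η c : ℝ} (hη : 0 ≤ η) (hc : 0 ≤ c)
    (ha : ∀ j ∈ I, 0 ≤ a j) (hac : ∀ j ∈ I, a j ≤ c)
    (huv : ∀ j ∈ I, j ≠ k → |u j - v j| ≤ η) (hk : |u k - v k| ≤ 1) :
    |∑ j ∈ I, a j * u j - ∑ j ∈ I, a j * v j| ≤ η * ∑ j ∈ I, a j + c := by
  have hterm : ∀ j ∈ I, |a j * u j - a j * v j| ≤ η * a j + if j = k then c else 0 := by
    intro j hj
    rw [← mul_sub, abs_mul, abs_of_nonneg (ha j hj)]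
    split_ifs with hjk
    · subst hjk
      nlinarith [ha j hj, hac j hj, abs_nonneg (u j - v j)]
    · nlinarith [ha j hj, huv j hj hjk]
  calc |∑ j ∈ I, a j * u j - ∑ j ∈ I, a j * v j|
      = |∑ j ∈ I, (a j * u j - a j * v j)| := by rw [sum_sub_distrib]
    _ ≤ ∑ j ∈ I, |a j * u j - a j * v j| := abs_sum_le_sum_abs _ _
    _ ≤ ∑ j ∈ I, (η * a j + if j = k then c else 0) := sum_le_sum hterm
    _ ≤ η * ∑ j ∈ I, a j + c := by
      rw [sum_add_distrib, ← mul_sum, sum_ite_eq']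
      split_ifs <;> linarith

theorem sum_range_mul_ite_lt {a : ℕ → ℝ} {k N : ℕ} (hkN : k ≤ N) :
    ∑ j ∈ range N, a j * (if j < k then 1 else 0) = ∑ j ∈ range k, a j := by
  rw [← sum_range_add_sum_Ico _ hkN,
    sum_congr rfl fun j hj => by rw [if_pos (mem_range.1 hj), mul_one], add_eq_left]
  exact sum_eq_zero fun j hj => by rw [if_neg (mem_Ico.1 hj).1.not_gt, mul_zero]

theorem IsCompact.exists_dist_le_inv_two_pow {α β : Type*} [PseudoMetricSpace α]
    [PseudoMetricSpace β] {s : Set α} {f : α → β} (hs : IsCompact s) (hf : ContinuousOn f s)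
    {ε : ℝ} (hε : 0 < ε) :
    ∃ n : ℕ, ∀ x ∈ s, ∀ y ∈ s, dist x y ≤ (2 ^ n)⁻¹ → dist (f x) (f y) < ε := by
  obtain ⟨δ, hδ, hfδ⟩ :=
    Metric.uniformContinuousOn_iff.mp (hs.uniformContinuousOn_of_continuous hf) ε hε
  obtain ⟨n, hn⟩ := exists_pow_lt_of_lt_one hδ (by norm_num : (2⁻¹ : ℝ) < 1)
  exact ⟨n, fun x hx y hy hxy => hfδ x hx y hy (by rw [inv_pow] at hn; linarith)⟩

theorem exists_forall_abs_sub_le_of_tendsto_atBot_atTop {σ : ℝ → ℝ}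
    (hbot : Tendsto σ atBot (𝓝 0)) (htop : Tendsto σ atTop (𝓝 1)) {η : ℝ} (hη : 0 < η) :
    ∃ t ≥ 1, (∀ y ≥ t, |σ y - 1| ≤ η) ∧ ∀ y ≤ -t, |σ y| ≤ η := by
  obtain ⟨T₁, hT₁⟩ := eventually_atTop.mp (htop.eventually (Metric.closedBall_mem_nhds 1 hη))
  obtain ⟨T₂, hT₂⟩ := eventually_atBot.mp (hbot.eventually (Metric.closedBall_mem_nhds 0 hη))
  refine ⟨max 1 (max T₁ (-T₂)), le_max_left _ _, fun y hy => hT₁ y ?_, fun y hy => ?_⟩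
  · exact le_trans (le_max_left _ _) (le_trans (le_max_right _ _) hy)
  · simpa using hT₂ y (by linarith [le_max_right T₁ (-T₂), le_max_right 1 (max T₁ (-T₂))])

theorem dist_natFloor_mul_div_le {c x : ℝ} (hc : 0 < c) (hx : 0 ≤ x) :
    dist x (⌊c * x⌋₊ / c) ≤ c⁻¹ := by
  have h₁ := Nat.floor_le (mul_nonneg hc.le hx)
  have h₂ := Nat.lt_floor_add_one (c * x)
  have h : x - ⌊c * x⌋₊ / c = (c * x - ⌊c * x⌋₊) / c := by field_simp
  rw [Real.dist_eq, h, abs_div, abs_of_pos hc, abs_of_nonneg (by linarith),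
    div_le_iff₀ hc, inv_mul_cancel₀ hc.ne']
  linarith

/-- At `y = 2 ^ n * x`, the argument `2 * y - 2 * (j + 1) + 1` vanishes at the midpoint of the
`j`-th dyadic interval. -/
theorem abs_sub_step_le_of_ne_floor {σ : ℝ → ℝ} {t η y : ℝ} (ht : 0 ≤ t) (hy : 0 ≤ y)
    (hσ₁ : ∀ z ≥ t, |σ z - 1| ≤ η) (hσ₀ : ∀ z ≤ -t, |σ z| ≤ η) {j : ℕ} (hj : j ≠ ⌊y⌋₊) :
    |σ (t * (2 * y - 2 * (j + 1) + 1)) - if j < ⌊y⌋₊ then 1 else 0| ≤ η := by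
  rcases lt_or_gt_of_ne hj with hlt | hgt
  · have hjy : (j : ℝ) + 1 ≤ y := le_trans (by exact_mod_cast hlt) (Nat.floor_le hy)
    rw [if_pos hlt]
    exact hσ₁ _ (le_mul_of_one_le_right ht (by linarith))
  · have hyj : y < j := (Nat.lt_floor_add_one y).trans_le (by exact_mod_cast hgt)
    rw [if_neg (by omega), sub_zero]
    exact hσ₀ _ (by nlinarith)

/-- `Δ_{n,j+1}` in the paper's notation, whose dyadic intervals are indexed from `1`. -/
noncomputable def dyadicIncrement (f : ℝ → ℝ) (n j : ℕ) : ℝ :=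
  f ((j + 1) / 2 ^ n) - f (j / 2 ^ n)

theorem natCast_div_two_pow_mem_Icc {n j : ℕ} (hj : j ≤ 2 ^ n) :
    (j : ℝ) / 2 ^ n ∈ Set.Icc (0 : ℝ) 1 :=
  ⟨by positivity, div_le_one_of_le₀ (by exact_mod_cast hj) (by positivity)⟩

theorem dyadicIncrement_nonneg {f : ℝ → ℝ} (hf : MonotoneOn f (Set.Icc 0 1)) {n j : ℕ}
    (hj : j < 2 ^ n) : 0 ≤ dyadicIncrement f n j := by
  have hj' : ((j + 1 : ℕ) : ℝ) / 2 ^ n ∈ Set.Icc (0 : ℝ) 1 := natCast_div_two_pow_mem_Icc hj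
  push_cast at hj'
  exact sub_nonneg.2 (hf (natCast_div_two_pow_mem_Icc hj.le) hj' (by gcongr; linarith))

theorem dyadicIncrement_lt {f : ℝ → ℝ} {n j : ℕ} {ε : ℝ} (hj : j < 2 ^ n)
    (hf : ∀ x ∈ Set.Icc (0 : ℝ) 1, ∀ y ∈ Set.Icc (0 : ℝ) 1,
      dist x y ≤ (2 ^ n)⁻¹ → dist (f x) (f y) < ε) :
    dyadicIncrement f n j < ε := by
  have hj' : ((j + 1 : ℕ) : ℝ) / 2 ^ n ∈ Set.Icc (0 : ℝ) 1 := natCast_div_two_pow_mem_Icc hj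
  push_cast at hj'
  refine (le_abs_self _).trans_lt (hf _ hj' _ (natCast_div_two_pow_mem_Icc hj.le) ?_)
  rw [Real.dist_eq, ← sub_div, add_sub_cancel_left, one_div, abs_of_pos (by positivity)]

theorem sum_range_dyadicIncrement (f : ℝ → ℝ) (n k : ℕ) :
    ∑ j ∈ range k, dyadicIncrement f n j = f (k / 2 ^ n) - f 0 := by
  simpa [dyadicIncrement] using sum_range_sub (fun j : ℕ => f (j / 2 ^ n)) k

theorem sum_range_two_pow_dyadicIncrement (f : ℝ → ℝ) (n : ℕ) :
    ∑ j ∈ range (2 ^ n), dyadicIncrement f n j = f 1 - f 0 := by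
  rw [sum_range_dyadicIncrement]
  push_cast
  rw [div_self (by positivity)]

theorem monotone_scalar_universal_approximation_general
    (f : ℝ → ℝ) (hfcont : ContinuousOn f (Set.Icc 0 1))
    (hfmono : MonotoneOn f (Set.Icc 0 1))
    (σ : ℝ → ℝ)
    (hσrange : ∀ x, σ x ∈ Set.Icc (0:ℝ) 1)
    (hσbot : Filter.Tendsto σ Filter.atBot (nhds 0))
    (hσtop : Filter.Tendsto σ Filter.atTop (nhds 1))
    (ε : ℝ) (hε : 0 < ε) :
    ∃ (n : ℕ) (t : ℝ) (Δ : Fin (2 ^ n) → ℝ),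
      1 ≤ t ∧ (∀ i, 0 ≤ Δ i) ∧
      ∀ x ∈ Set.Icc (0:ℝ) 1,
        |f x - (f 0 + ∑ i : Fin (2 ^ n),
          Δ i * σ (t * (2 ^ (n + 1) * x - 2 * ((i : ℝ) + 1) + 1)))| < ε := by
  have hε3 : 0 < ε / 3 := by positivity
  obtain ⟨n, hn⟩ := isCompact_Icc.exists_dist_le_inv_two_pow hfcont hε3
  obtain ⟨η, hη, hηM⟩ := exists_pos_mul_lt hε3 (f 1 - f 0)
  obtain ⟨t, ht, hσ₁, hσ₀⟩ := exists_forall_abs_sub_le_of_tendsto_atBot_atTop hσbot hσtop hη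
  refine ⟨n, t, fun i => dyadicIncrement f n i, ht, fun i => dyadicIncrement_nonneg hfmono i.2,
    fun x hx => ?_⟩
  set k := ⌊2 ^ n * x⌋₊
  have hkN : k ≤ 2 ^ n :=
    Nat.floor_le_of_le (by push_cast; exact mul_le_of_le_one_right (by positivity) hx.2)
  have hxk : dist (f x) (f (k / 2 ^ n)) < ε / 3 :=
    hn x hx _ (natCast_div_two_pow_mem_Icc hkN) (dist_natFloor_mul_div_le (by positivity) hx.1)
  have hstep := abs_sum_mul_sub_sum_mul_le (range (2 ^ n)) k hη.le hε3.le
    (u := fun j : ℕ => σ (t * (2 ^ (n + 1) * x - 2 * ((j : ℝ) + 1) + 1)))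
    (v := fun j => if j < k then 1 else 0)
    (fun j hj => dyadicIncrement_nonneg hfmono (mem_range.1 hj))
    (fun j hj => (dyadicIncrement_lt (mem_range.1 hj) hn).le)
    (fun j _ hjk => by
      have h2 : (2 : ℝ) ^ (n + 1) * x = 2 * (2 ^ n * x) := by ring
      simpa only [h2] using
        abs_sub_step_le_of_ne_floor (by linarith) (by have := hx.1; positivity) hσ₁ hσ₀ hjk)
    (by
      simp only [lt_irrefl, if_false, sub_zero]
      rw [abs_of_nonneg (hσrange _).1]
      exact (hσrange _).2)
  rw [sum_range_mul_ite_lt hkN, sum_range_dyadicIncrement,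
    sum_range_two_pow_dyadicIncrement] at hstep
  beta_reduce
  rw [abs_lt, Fin.sum_univ_eq_sum_range (fun j : ℕ => dyadicIncrement f n j *
    σ (t * (2 ^ (n + 1) * x - 2 * ((j : ℝ) + 1) + 1))) (2 ^ n)]
  rw [Real.dist_eq, abs_lt] at hxk
  rw [abs_le] at hstep
  constructor <;> linarith

/-- Universal approximation of continuous nondecreasing functions on [0,1] by sums of
shifted, scaled sigmoidal functions. -/
theorem monotone_scalar_universal_approximation
    (f : ℝ → ℝ) (hfcont : ContinuousOn f (Set.Icc 0 1))
    (hfmono : MonotoneOn f (Set.Icc 0 1))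
    (σ : ℝ → ℝ) (hσcont : Continuous σ) (hσmono : Monotone σ)
    (hσrange : ∀ x, σ x ∈ Set.Icc (0:ℝ) 1)
    (hσbot : Filter.Tendsto σ Filter.atBot (nhds 0))
    (hσtop : Filter.Tendsto σ Filter.atTop (nhds 1))
    (ε : ℝ) (hε : 0 < ε) :
    ∃ (n : ℕ) (t : ℝ) (Δ : Fin (2 ^ n) → ℝ),
      1 ≤ t ∧ (∀ i, 0 ≤ Δ i) ∧
      ∀ x ∈ Set.Icc (0:ℝ) 1,
        |f x - (f 0 + ∑ i : Fin (2 ^ n),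
          Δ i * σ (t * (2 ^ (n + 1) * x - 2 * ((i : ℝ) + 1) + 1)))| < ε :=
  monotone_scalar_universal_approximation_general f hfcont hfmono σ hσrange hσbot hσtop ε hε
end

section
/- Consider the map h(x) = ρ(φ(Wx + b)) · Wᵀ σ(Wx + b) where σ = ∇φ, φ : ℝ^m → ℝ is convex and twice differentiable, ρ : ℝ → ℝ_{≥0} is differentiable, nondecreasing, and nonnegative. Then the Jacobian of h at every x is symmetric positive semidefinite; in particular, h is monotone. -/
open RealInnerProductSpace Matrix

/-! The map `h` is the gradient of `ψ x = R (φ (W x + b))`, where `R` is the primitive of `ρ`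
vanishing at `0`; since `ρ` is nonnegative and nondecreasing, `R` is nondecreasing and convex, so
`ψ` is convex. The gradient of a convex function is a monotone operator, the derivative of a
differentiable monotone operator is positive semidefinite, and the derivative of a gradient is
symmetric because second derivatives are. -/

open Set InnerProductSpace

lemma ConvexOn.comp_of_monotone {𝕜 E β : Type*} [Semiring 𝕜] [PartialOrder 𝕜] [AddCommMonoid E]
    [AddCommMonoid β] [PartialOrder β] [SMul 𝕜 E] [SMul 𝕜 β] {s : Set E} {f : E → β} {g : β → β}
    (hg : ConvexOn 𝕜 univ g) (hf : ConvexOn 𝕜 s f) (hg' : Monotone g) : ConvexOn 𝕜 s (g ∘ f) :=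
  ⟨hf.1, fun _ hx _ hy _ _ ha hb hab =>
    (hg' (hf.2 hx hy ha hb hab)).trans (hg.2 trivial trivial ha hb hab)⟩

section Primitive

variable {ρ : ℝ → ℝ}

lemma differentiable_primitive (hc : Continuous ρ) :
    Differentiable ℝ fun s => ∫ t in (0 : ℝ)..s, ρ t :=
  fun s => (hc.integral_hasStrictDerivAt 0 s).hasDerivAt.differentiableAt

lemma deriv_primitive (hc : Continuous ρ) : deriv (fun s => ∫ t in (0 : ℝ)..s, ρ t) = ρ :=
  funext (Continuous.deriv_integral ρ hc 0)

lemma convexOn_primitive (hc : Continuous ρ) (hm : Monotone ρ) :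
    ConvexOn ℝ univ fun s => ∫ t in (0 : ℝ)..s, ρ t :=
  Monotone.convexOn_univ_of_deriv (differentiable_primitive hc) (by rwa [deriv_primitive hc])

lemma monotone_primitive (hc : Continuous ρ) (h0 : ∀ s, 0 ≤ ρ s) :
    Monotone fun s => ∫ t in (0 : ℝ)..s, ρ t :=
  monotone_of_deriv_nonneg (differentiable_primitive hc) (by rwa [deriv_primitive hc])

end Primitive

section InnerProductSpace

variable {E F : Type*} [NormedAddCommGroup E] [InnerProductSpace ℝ E]
  [NormedAddCommGroup F] [InnerProductSpace ℝ F]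

lemma monotone_inner_apply_add_smul {g : E → E} (hg : ∀ x y, 0 ≤ ⟪g x - g y, x - y⟫) (x u : E) :
    Monotone fun t : ℝ => ⟪g (x + t • u), u⟫ := by
  intro s t hst
  have h := hg (x + t • u) (x + s • u)
  rw [add_sub_add_left_eq_sub, ← sub_smul, real_inner_smul_right, inner_sub_left] at h
  rcases hst.eq_or_lt with rfl | hlt
  · rfl
  · exact sub_nonneg.mp (nonneg_of_mul_nonneg_right h (sub_pos.mpr hlt))

lemma inner_apply_self_nonneg_of_hasFDerivAt {g : E → E} (hg : ∀ x y, 0 ≤ ⟪g x - g y, x - y⟫)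
    {L : E →L[ℝ] E} {x : E} (hL : HasFDerivAt g L x) (u : E) : 0 ≤ ⟪L u, u⟫ := by
  have hline : HasDerivAt (fun t : ℝ => ⟪g (x + t • u), u⟫) ⟪L u, u⟫ 0 := by
    have hxu : HasDerivAt (fun t : ℝ => x + t • u) u 0 := by
      simpa using ((hasDerivAt_id (0 : ℝ)).smul_const u).const_add x
    simpa using (hL.comp_hasDerivAt_of_eq 0 hxu (by simp)).inner ℝ (hasDerivAt_const 0 u)
  rw [← hline.deriv]
  exact (monotone_inner_apply_add_smul hg x u).deriv_nonneg

variable [CompleteSpace E]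

lemma HasDerivAt.comp_hasGradientAt {R : ℝ → ℝ} {r : ℝ} {p : E → ℝ} {g x : E}
    (hR : HasDerivAt R r (p x)) (hp : HasGradientAt p g x) :
    HasGradientAt (R ∘ p) (r • g) x := by
  rw [hasGradientAt_iff_hasFDerivAt] at hp ⊢
  refine (hR.comp_hasFDerivAt x hp).congr_fderiv ?_
  ext u
  simp

lemma HasGradientAt.comp_linearMap_add_const [FiniteDimensional ℝ E] [FiniteDimensional ℝ F]
    {f : F → ℝ} (A : E →ₗ[ℝ] F) (b : F) {s : F} {x : E} (hf : HasGradientAt f s (A x + b)) :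
    HasGradientAt (fun x => f (A x + b)) (LinearMap.adjoint A s) x := by
  rw [hasGradientAt_iff_hasFDerivAt] at hf ⊢
  refine (hf.comp x (A.toContinuousLinearMap.hasFDerivAt.add_const b)).congr_fderiv ?_
  ext u
  simp [LinearMap.adjoint_inner_left]

lemma ContDiff.differentiable_gradient {f : E → ℝ} (hf : ContDiff ℝ 2 f) :
    Differentiable ℝ (gradient f) := by
  have hf' : Differentiable ℝ (fderiv ℝ f) :=
    (hf.fderiv_right (m := 1) (by norm_num)).differentiable one_ne_zero
  change Differentiable ℝ ((toDual ℝ E).symm ∘ fderiv ℝ f)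
  exact ((toDual ℝ E).symm.toContinuousLinearEquiv : StrongDual ℝ E ≃L[ℝ] E).differentiable.comp hf'

lemma ConvexOn.inner_sub_nonneg_of_hasGradientAt {f : E → ℝ} {g : E → E}
    (hf : ConvexOn ℝ univ f) (hg : ∀ x, HasGradientAt f (g x) x) (x y : E) :
    0 ≤ ⟪g x - g y, x - y⟫ := by
  have hline : ∀ t : ℝ,
      HasDerivAt (f ∘ AffineMap.lineMap y x) ⟪g (AffineMap.lineMap y x t), x - y⟫ t := fun t => by
    simpa using (hasGradientAt_iff_hasFDerivAt.mp (hg _)).comp_hasDerivAt t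
      AffineMap.hasDerivAt_lineMap
  have hderiv_mono := (hf.comp_affineMap (AffineMap.lineMap y x)).monotoneOn_deriv
    (fun t _ => (hline t).differentiableAt) (mem_univ 0) (mem_univ 1) zero_le_one
  rw [(hline 0).deriv, (hline 1).deriv] at hderiv_mono
  simp only [AffineMap.lineMap_apply_zero, AffineMap.lineMap_apply_one] at hderiv_mono
  rw [inner_sub_left]
  linarith

lemma inner_apply_comm_of_hasFDerivAt_gradient {f : E → ℝ} {g : E → E}
    (hf : ∀ y, HasGradientAt f (g y) y) {L : E →L[ℝ] E} {x : E} (hL : HasFDerivAt g L x)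
    (u v : E) : ⟪L u, v⟫ = ⟪u, L v⟫ := by
  have h := second_derivative_symmetric (fun y => hasGradientAt_iff_hasFDerivAt.mp (hf y))
    ((toDual ℝ E).toContinuousLinearEquiv.toContinuousLinearMap.hasFDerivAt.comp x hL) u v
  simpa [real_inner_comm] using h

end InnerProductSpace

/-- A module h(x) = ρ(φ(Wx+b))·Wᵀσ(Wx+b) with σ = ∇φ, φ convex and C², and ρ
differentiable, nondecreasing, nonnegative, has an everywhere symmetric PSD Jacobian;
in particular h is monotone. -/
theorem gradnet_module_psd_jacobian (m d : ℕ)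
    (φ : EuclideanSpace ℝ (Fin m) → ℝ) (hφ : ContDiff ℝ 2 φ)
    (hφconv : ConvexOn ℝ Set.univ φ)
    (σ : EuclideanSpace ℝ (Fin m) → EuclideanSpace ℝ (Fin m))
    (hσ : ∀ z, gradient φ z = σ z)
    (ρ : ℝ → ℝ) (hρdiff : Differentiable ℝ ρ) (hρmono : Monotone ρ)
    (hρnonneg : ∀ s, 0 ≤ ρ s)
    (W : Matrix (Fin m) (Fin d) ℝ) (b : EuclideanSpace ℝ (Fin m)) :
    (∀ (x u v : EuclideanSpace ℝ (Fin d)),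
      ⟪fderiv ℝ (fun x => ρ (φ (Matrix.toEuclideanLin W x + b)) •
          Matrix.toEuclideanLin Wᵀ (σ (Matrix.toEuclideanLin W x + b))) x u, v⟫ =
      ⟪u, fderiv ℝ (fun x => ρ (φ (Matrix.toEuclideanLin W x + b)) •
          Matrix.toEuclideanLin Wᵀ (σ (Matrix.toEuclideanLin W x + b))) x v⟫) ∧
    (∀ (x u : EuclideanSpace ℝ (Fin d)),
      0 ≤ ⟪fderiv ℝ (fun x => ρ (φ (Matrix.toEuclideanLin W x + b)) •
          Matrix.toEuclideanLin Wᵀ (σ (Matrix.toEuclideanLin W x + b))) x u, u⟫) ∧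
    (∀ (x y : EuclideanSpace ℝ (Fin d)),
      0 ≤ ⟪(ρ (φ (Matrix.toEuclideanLin W x + b)) •
              Matrix.toEuclideanLin Wᵀ (σ (Matrix.toEuclideanLin W x + b))) -
            (ρ (φ (Matrix.toEuclideanLin W y + b)) •
              Matrix.toEuclideanLin Wᵀ (σ (Matrix.toEuclideanLin W y + b))), x - y⟫) := by
  set A := toEuclideanLin W
  set h := fun x => ρ (φ (A x + b)) • toEuclideanLin Wᵀ (σ (A x + b))
  set ψ := (fun s => ∫ t in (0 : ℝ)..s, ρ t) ∘ fun x => φ (A x + b)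
  have hφdiff : Differentiable ℝ φ := hφ.differentiable (by norm_num)
  have hadjoint : LinearMap.adjoint A = toEuclideanLin Wᵀ := by
    rw [← toEuclideanLin_conjTranspose_eq_adjoint, conjTranspose_eq_transpose_of_trivial]
  have hψgrad : ∀ x, HasGradientAt ψ (h x) x := fun x => by
    have hφgrad := hσ _ ▸ (hφdiff (A x + b)).hasGradientAt
    simpa only [hadjoint] using (hρdiff.continuous.integral_hasStrictDerivAt 0 _).hasDerivAt
      |>.comp_hasGradientAt (hφgrad.comp_linearMap_add_const A b)
  have hψconv : ConvexOn ℝ univ ψ :=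
    (convexOn_primitive hρdiff.continuous hρmono).comp_of_monotone
      (hφconv.comp_affineMap (A.toAffineMap + AffineMap.const ℝ (EuclideanSpace ℝ (Fin d)) b))
      (monotone_primitive hρdiff.continuous hρnonneg)
  have hA : Differentiable ℝ fun x => A x + b :=
    A.toContinuousLinearMap.differentiable.add_const b
  have hσdiff : Differentiable ℝ σ := funext hσ ▸ hφ.differentiable_gradient
  have hhdiff : Differentiable ℝ h := (hρdiff.comp (hφdiff.comp hA)).smul
    ((toEuclideanLin Wᵀ).toContinuousLinearMap.differentiable.comp (hσdiff.comp hA))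
  have hmono := hψconv.inner_sub_nonneg_of_hasGradientAt hψgrad
  exact ⟨fun x => inner_apply_comm_of_hasFDerivAt_gradient hψgrad (hhdiff x).hasFDerivAt,
    fun x => inner_apply_self_nonneg_of_hasFDerivAt hmono (hhdiff x).hasFDerivAt, hmono⟩
end
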